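/- For s ∈ [0,1], n×n matrices A, E, and integer ℓ ≥ 0, with B = [[A, I],[0,0]], one has exp((1-s)B) = [[exp((1-s)A), (1-s)·φ_1((1-s)A)],[0, I]] and φ_ℓ(s(B+Ẽ)) = [[φ_ℓ(s(A+E)), s·φ_{ℓ+1}(s(A+E))],[0, (1/ℓ!)·I]], where Ẽ = [[E,0],[0,0]]. -/

import Mathlib

/-!
For `M = [[C, D], [0, 0]]` one has `M ^ (k + 1) = [[C ^ (k + 1), C ^ k * D], [0, 0]]`. Summing the
series `φ_ℓ(M) = Σ M^k/(k+ℓ)!` blockwise, the upper-right block collects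
`Σ C^k D/(k+1+ℓ)! = φ_{ℓ+1}(C) D`, while the lower-right block only receives the `k = 0` term
`I/ℓ!`. Both identities are the case `C = t A` (resp. `t (A + E)`), `D = t I`.
-/
open Matrix

/-- The matrix φ-functions: `φ_ℓ(M) = Σ_{k=0}^∞ M^k/(k+ℓ)!`, so `φ_0 = exp`. -/
noncomputable def phiM {m : Type*} [Fintype m] [DecidableEq m] (ℓ : ℕ)
    (M : Matrix m m ℝ) : Matrix m m ℝ :=
  ∑' k : ℕ, ((Nat.factorial (k + ℓ) : ℝ))⁻¹ • M ^ k

open scoped Nat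

theorem HasSum.matrix_fromBlocks {ι l m n o R : Type*} [AddCommMonoid R] [TopologicalSpace R]
    {A : ι → Matrix n l R} {B : ι → Matrix n m R} {C : ι → Matrix o l R}
    {D : ι → Matrix o m R} {a : Matrix n l R} {b : Matrix n m R} {c : Matrix o l R}
    {d : Matrix o m R} (hA : HasSum A a) (hB : HasSum B b) (hC : HasSum C c)
    (hD : HasSum D d) :
    HasSum (fun i => fromBlocks (A i) (B i) (C i) (D i)) (fromBlocks a b c d) := by
  refine Pi.hasSum.2 fun i => Pi.hasSum.2 fun j => ?_
  rcases i with i | i <;> rcases j with j | j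
  exacts [Pi.hasSum.1 (Pi.hasSum.1 hA i) j, Pi.hasSum.1 (Pi.hasSum.1 hB i) j,
    Pi.hasSum.1 (Pi.hasSum.1 hC i) j, Pi.hasSum.1 (Pi.hasSum.1 hD i) j]

theorem fromBlocks_zero_zero_pow_succ {m n R : Type*} [Fintype m] [Fintype n] [DecidableEq m]
    [DecidableEq n] [Semiring R] (C : Matrix m m R) (D : Matrix m n R) (k : ℕ) :
    (fromBlocks C D 0 0 : Matrix (m ⊕ n) (m ⊕ n) R) ^ (k + 1) =
      fromBlocks (C ^ (k + 1)) (C ^ k * D) 0 0 := by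
  induction k with
  | zero => simp
  | succ k ih =>
    rw [pow_succ', ih, fromBlocks_multiply, pow_succ' C (k + 1), pow_succ' C k, Matrix.mul_assoc]
    simp

section Summability

attribute [local instance] Matrix.linftyOpNormedRing Matrix.linftyOpNormedAlgebra

theorem summable_phiM_series {m : Type*} [Fintype m] [DecidableEq m] (ℓ : ℕ)
    (M : Matrix m m ℝ) : Summable fun k : ℕ => ((k + ℓ)! : ℝ)⁻¹ • M ^ k := by
  refine (NormedSpace.norm_expSeries_summable' (𝕂 := ℝ) M).of_norm_bounded fun k => ?_
  rw [norm_smul, norm_smul]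
  gcongr
  simp only [norm_inv, Real.norm_natCast]
  gcongr
  exact Nat.le_add_right k ℓ

end Summability

variable {m : Type*} [Fintype m] [DecidableEq m]

theorem hasSum_phiM (ℓ : ℕ) (M : Matrix m m ℝ) :
    HasSum (fun k : ℕ => ((k + ℓ)! : ℝ)⁻¹ • M ^ k) (phiM ℓ M) :=
  (summable_phiM_series ℓ M).hasSum

theorem hasSum_phiM_tail (ℓ : ℕ) (M : Matrix m m ℝ) :
    HasSum (fun k : ℕ => ((k + 1 + ℓ)! : ℝ)⁻¹ • M ^ (k + 1))
      (phiM ℓ M - (ℓ ! : ℝ)⁻¹ • 1) := by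
  simpa using (hasSum_nat_add_iff' 1).mpr (hasSum_phiM ℓ M)

theorem phiM_fromBlocks_zero_zero {n : Type*} [Fintype n] [DecidableEq n] (ℓ : ℕ)
    (C : Matrix m m ℝ) (D : Matrix m n ℝ) :
    phiM ℓ (fromBlocks C D 0 0) =
      fromBlocks (phiM ℓ C) (phiM (ℓ + 1) C * D) 0 ((ℓ ! : ℝ)⁻¹ • 1) := by
  have hD : HasSum (fun k : ℕ => ((k + 1 + ℓ)! : ℝ)⁻¹ • (C ^ k * D)) (phiM (ℓ + 1) C * D) := by
    simpa only [Function.comp_def, addMonoidHomMulRight_apply, Matrix.smul_mul, add_assoc,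
      add_comm 1 ℓ] using (hasSum_phiM (ℓ + 1) C).map (addMonoidHomMulRight D)
        (continuous_id.matrix_mul continuous_const)
  have hblocks := (hasSum_phiM_tail ℓ C).matrix_fromBlocks hD
    (hasSum_zero (α := Matrix n m ℝ)) (hasSum_zero (α := Matrix n n ℝ))
  -- compare tails: only for `k ≥ 1` is the `k`-th term a `[[·, ·], [0, 0]]` block
  have htail := hasSum_phiM_tail ℓ (fromBlocks C D 0 0)
  simp only [fromBlocks_zero_zero_pow_succ, fromBlocks_smul, smul_zero] at htail
  rw [sub_eq_iff_eq_add.mp (htail.unique hblocks), ← fromBlocks_one, fromBlocks_smul,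
    fromBlocks_add]
  simp

theorem phiM_smul_fromBlocks_one (ℓ : ℕ) (t : ℝ) (C : Matrix m m ℝ) :
    phiM ℓ (t • fromBlocks C (1 : Matrix m m ℝ) 0 0) =
      fromBlocks (phiM ℓ (t • C)) (t • phiM (ℓ + 1) (t • C)) 0 ((ℓ ! : ℝ)⁻¹ • 1) := by
  rw [fromBlocks_smul, smul_zero, phiM_fromBlocks_zero_zero, Matrix.mul_smul, Matrix.mul_one]

theorem phiM_block_scaled_general {n : ℕ} (s : ℝ)
    (A E : Matrix (Fin n) (Fin n) ℝ) (ℓ : ℕ)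
    (B : Matrix (Fin n ⊕ Fin n) (Fin n ⊕ Fin n) ℝ)
    (hB : B = Matrix.fromBlocks A (1 : Matrix (Fin n) (Fin n) ℝ) 0 0)
    (Et : Matrix (Fin n ⊕ Fin n) (Fin n ⊕ Fin n) ℝ)
    (hEt : Et = Matrix.fromBlocks E 0 0 0) :
    phiM 0 ((1 - s) • B) =
      Matrix.fromBlocks (phiM 0 ((1 - s) • A)) ((1 - s) • phiM 1 ((1 - s) • A)) 0
        (1 : Matrix (Fin n) (Fin n) ℝ) ∧
    phiM ℓ (s • (B + Et)) =
      Matrix.fromBlocks (phiM ℓ (s • (A + E))) (s • phiM (ℓ + 1) (s • (A + E))) 0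
        (((Nat.factorial ℓ : ℝ))⁻¹ • (1 : Matrix (Fin n) (Fin n) ℝ)) := by
  have hBEt : B + Et = fromBlocks (A + E) 1 0 0 := by
    rw [hB, hEt, fromBlocks_add, add_zero, zero_add]
  constructor
  · rw [hB, phiM_smul_fromBlocks_one, Nat.factorial_zero, Nat.cast_one, inv_one, one_smul]
  · rw [hBEt, phiM_smul_fromBlocks_one]

theorem phiM_block_scaled {n : ℕ} (s : ℝ) (hs : s ∈ Set.Icc (0:ℝ) 1)
    (A E : Matrix (Fin n) (Fin n) ℝ) (ℓ : ℕ)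
    (B : Matrix (Fin n ⊕ Fin n) (Fin n ⊕ Fin n) ℝ)
    (hB : B = Matrix.fromBlocks A (1 : Matrix (Fin n) (Fin n) ℝ) 0 0)
    (Et : Matrix (Fin n ⊕ Fin n) (Fin n ⊕ Fin n) ℝ)
    (hEt : Et = Matrix.fromBlocks E 0 0 0) :
    phiM 0 ((1 - s) • B) =
      Matrix.fromBlocks (phiM 0 ((1 - s) • A)) ((1 - s) • phiM 1 ((1 - s) • A)) 0
        (1 : Matrix (Fin n) (Fin n) ℝ) ∧
    phiM ℓ (s • (B + Et)) =
      Matrix.fromBlocks (phiM ℓ (s • (A + E))) (s • phiM (ℓ + 1) (s • (A + E))) 0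
        (((Nat.factorial ℓ : ℝ))⁻¹ • (1 : Matrix (Fin n) (Fin n) ℝ)) :=
  phiM_block_scaled_general s A E ℓ B hB Et hEt
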